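/- arXiv:2109.14079 — 4 statements merged into one kernel-verified Lean document; each statement's English description precedes it below -/
import Mathlib

section
/- For every i ∈ {1,…,n}, ‖Ũ_{k,T}((i:n:Tn),:)‖₂² ≤ Σ_{j=1}^k u_j(i)². Consequently, for any probability distribution p on {1,…,n} with p(i) > 0 for all i, the dynamical coherence ν₁(p)² = max_{1≤i≤n} (1/p(i))‖Ũ_{k,T}((i:n:Tn),:)‖₂² is at most the static graph weighted coherence max_{1≤i≤n} (1/p(i)) Σ_{j=1}^k u_j(i)². (Claim made in the remark after Theorem 4.6.) -/
/-!
The spectral norm is at most the Frobenius norm, and the normalisation `f_T` makes the `j`-th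
column of the block `Ũ_{k,T}((i:n:Tn),:)` have squared length
`u_j(i)² · Σ_t λ_j^{2t} / f_T(λ_j)² ≤ u_j(i)²` (with equality once `T > 0`). Summing over `j`
gives the row bound; the coherence bound follows by comparing the weighted maxima termwise.
-/

open scoped BigOperators Matrix

/-- `f_T(λ) = √(Σ_{t=0}^{T-1} λ^{2t})`. -/
noncomputable def fT (T : ℕ) (l : ℝ) : ℝ := Real.sqrt (∑ t ∈ Finset.range T, l ^ (2 * t))

/-- The spectral (ℓ²→ℓ² operator) norm of a real matrix. -/
noncomputable def specNorm {m p : Type*} [Fintype m] [Fintype p] [DecidableEq p]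
    (M : Matrix m p ℝ) : ℝ :=
  ‖LinearMap.toContinuousLinearMap (Matrix.toEuclideanLin M)‖

lemma specNorm_sq_le_sum_sq {m p : Type*} [Fintype m] [Fintype p] [DecidableEq p]
    (M : Matrix m p ℝ) : specNorm M ^ 2 ≤ ∑ t, ∑ j, M t j ^ 2 := by
  have hF : 0 ≤ ∑ t, ∑ j, M t j ^ 2 := by positivity
  suffices specNorm M ≤ √(∑ t, ∑ j, M t j ^ 2) from
    (Real.le_sqrt (norm_nonneg _) hF).1 this
  refine ContinuousLinearMap.opNorm_le_bound _ (Real.sqrt_nonneg _) fun x ↦ ?_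
  refine (sq_le_sq₀ (norm_nonneg _) (by positivity)).1 ?_
  rw [mul_pow, Real.sq_sqrt hF, EuclideanSpace.norm_sq_eq, EuclideanSpace.norm_sq_eq,
    Finset.sum_mul]
  refine Finset.sum_le_sum fun t _ ↦ ?_
  simpa [Matrix.toLpLin_apply, Matrix.mulVec, dotProduct] using
    Finset.sum_mul_sq_le_sq_mul_sq Finset.univ (M t) x

lemma sum_sq_pow_mul_div_fT_le (T : ℕ) (l a : ℝ) :
    ∑ t : Fin T, (l ^ (t : ℕ) * a / fT T l) ^ 2 ≤ a ^ 2 := by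
  have hf : fT T l ^ 2 = ∑ t : Fin T, (l ^ (t : ℕ)) ^ 2 := by
    rw [fT, Real.sq_sqrt (Finset.sum_nonneg fun t _ ↦ (even_two_mul t).pow_nonneg l),
      ← Fin.sum_univ_eq_sum_range]
    simp only [pow_mul']
  calc ∑ t : Fin T, (l ^ (t : ℕ) * a / fT T l) ^ 2
      = (∑ t : Fin T, (l ^ (t : ℕ)) ^ 2) * a ^ 2 / fT T l ^ 2 := by
        rw [Finset.sum_mul, Finset.sum_div]
        exact Finset.sum_congr rfl fun t _ ↦ by ring
    _ = a ^ 2 * (fT T l ^ 2 / fT T l ^ 2) := by rw [← hf]; ring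
    _ ≤ a ^ 2 := mul_le_of_le_one_right (sq_nonneg a) (div_self_le_one _)

theorem stmt8_general (n k T : ℕ)
    (u : Fin k → Fin n → ℝ)
    (lam : Fin k → ℝ)
    (sub : Fin n → Matrix (Fin T) (Fin k) ℝ)
    (hsub : ∀ (i : Fin n) (t : Fin T) (j : Fin k),
      sub i t j = lam j ^ (t : ℕ) * u j i / fT T (lam j))
    (p : Fin n → ℝ) (hp : ∀ i, 0 < p i) :
    (∀ i : Fin n, specNorm (sub i) ^ 2 ≤ ∑ j, u j i ^ 2) ∧
      (⨆ i : Fin n, (p i)⁻¹ * specNorm (sub i) ^ 2)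
        ≤ (⨆ i : Fin n, (p i)⁻¹ * ∑ j, u j i ^ 2) := by
  have hrow : ∀ i, specNorm (sub i) ^ 2 ≤ ∑ j, u j i ^ 2 := fun i ↦ by
    refine (specNorm_sq_le_sum_sq (sub i)).trans ?_
    rw [Finset.sum_comm]
    exact Finset.sum_le_sum fun j _ ↦ by
      simpa only [hsub] using sum_sq_pow_mul_div_fT_le T (lam j) (u j i)
  refine ⟨hrow, ciSup_mono (Set.finite_range _).bddAbove fun i ↦ ?_⟩
  exact mul_le_mul_of_nonneg_left (hrow i) (inv_nonneg.2 (hp i).le)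

/-- remark after Theorem 4.6: for every `i`,
`‖Ũ_{k,T}((i:n:Tn),:)‖₂² ≤ Σ_j u_j(i)²`; consequently, for every positive
probability distribution `p` on `{1,…,n}`, the dynamical coherence
`ν₁(p)² = max_i (1/p(i)) ‖Ũ_{k,T}((i:n:Tn),:)‖₂²` is at most the static graph
weighted coherence `max_i (1/p(i)) Σ_j u_j(i)²`. -/
theorem stmt8 (n k T : ℕ) (hn : 0 < n) (hk : 0 < k) (hT : 0 < T) (hkn : k ≤ n)
    (u : Fin k → Fin n → ℝ)
    (hu : ∀ i j : Fin k, ∑ a, u i a * u j a = if i = j then 1 else 0)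
    (lam : Fin k → ℝ)
    (hmono : ∀ i j : Fin k, i ≤ j → lam j ≤ lam i)
    (hnn : ∀ j, 0 ≤ lam j)
    (sub : Fin n → Matrix (Fin T) (Fin k) ℝ)
    (hsub : ∀ (i : Fin n) (t : Fin T) (j : Fin k),
      sub i t j = lam j ^ (t : ℕ) * u j i / fT T (lam j))
    (p : Fin n → ℝ) (hp : ∀ i, 0 < p i) (hpsum : ∑ i, p i = 1) :
    (∀ i : Fin n, specNorm (sub i) ^ 2 ≤ ∑ j, u j i ^ 2) ∧
      (⨆ i : Fin n, (p i)⁻¹ * specNorm (sub i) ^ 2)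
        ≤ (⨆ i : Fin n, (p i)⁻¹ * ∑ j, u j i ^ 2) :=
  stmt8_general n k T u lam sub hsub p hp
end

section
/- (Theorem 5.1, part (ii), deterministic form.) Let δ ∈ (0,1) and suppose the upper frame bound ‖Φ π_{A,T}(v)‖₂ ≤ √(1+δ) f_T(λ_1) ‖v‖₂ holds for all v ∈ span{u_1,…,u_k}. Let x, x₀ ∈ span{u_1,…,u_k} and define e₀ ∈ ℝ^M by (e₀)_i = (π_{A,T}(x₀))(s(i)) and y ∈ ℝ^M by y_i = (π_{A,T}(x))(s(i)) + (e₀)_i. Then x* = x + x₀ is a minimizer over span{u_1,…,u_k} of x̃ ↦ ‖Φ π_{A,T}(x̃) − D y‖₂ (the objective value at x* is 0), and ‖x* − x‖₂ ≥ (1/(√(1+δ) f_T(λ_1))) ‖D e₀‖₂. -/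
open scoped BigOperators Matrix

/-! Since `π_{A,T}` is linear, `x + x₀` reproduces the data `y` exactly and so attains the
minimal objective value `0`; the lower bound is the upper frame bound applied to
`x* - x = x₀`. -/

lemma fT_nonneg (T : ℕ) (l : ℝ) : 0 ≤ fT T l := Real.sqrt_nonneg _

theorem stmt13_general (n k T M : ℕ) (hk : 0 < k)
    (u : Fin k → Fin n → ℝ)
    (lam : Fin k → ℝ)
    (A : Matrix (Fin n) (Fin n) ℝ)
    (s : Fin M → Fin T × Fin n) (d : Fin M → ℝ)
    (δ : ℝ)
    (hframe : ∀ v ∈ Submodule.span ℝ (Set.range u),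
      Real.sqrt (∑ i, (d i * ((A ^ ((s i).1 : ℕ)).mulVec v) (s i).2) ^ 2)
        ≤ Real.sqrt (1 + δ) * fT T (lam ⟨0, hk⟩) * Real.sqrt (∑ a, v a ^ 2))
    (x : Fin n → ℝ)
    (x0 : Fin n → ℝ) (hx0 : x0 ∈ Submodule.span ℝ (Set.range u))
    (e0 : Fin M → ℝ) (he0 : ∀ i, e0 i = ((A ^ ((s i).1 : ℕ)).mulVec x0) (s i).2)
    (y : Fin M → ℝ)
    (hy : ∀ i, y i = ((A ^ ((s i).1 : ℕ)).mulVec x) (s i).2 + e0 i) :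
    Real.sqrt (∑ i, (d i * ((A ^ ((s i).1 : ℕ)).mulVec (x + x0)) (s i).2
          - d i * y i) ^ 2) = 0 ∧
      (∀ z ∈ Submodule.span ℝ (Set.range u),
        Real.sqrt (∑ i, (d i * ((A ^ ((s i).1 : ℕ)).mulVec (x + x0)) (s i).2
              - d i * y i) ^ 2)
          ≤ Real.sqrt (∑ i, (d i * ((A ^ ((s i).1 : ℕ)).mulVec z) (s i).2
              - d i * y i) ^ 2)) ∧
      1 / (Real.sqrt (1 + δ) * fT T (lam ⟨0, hk⟩))
          * Real.sqrt (∑ i, (d i * e0 i) ^ 2)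
        ≤ Real.sqrt (∑ a, ((x + x0) a - x a) ^ 2) := by
  have hfit : ∀ i, d i * ((A ^ ((s i).1 : ℕ)).mulVec (x + x0)) (s i).2 - d i * y i = 0 :=
    fun i => by rw [hy, he0, Matrix.mulVec_add, Pi.add_apply, mul_add, sub_self]
  have hzero : Real.sqrt (∑ i, (d i * ((A ^ ((s i).1 : ℕ)).mulVec (x + x0)) (s i).2
      - d i * y i) ^ 2) = 0 := by
    simp [hfit]
  refine ⟨hzero, fun z _ => hzero ▸ Real.sqrt_nonneg _, ?_⟩
  have hdiff : ∀ a, (x + x0) a - x a = x0 a := fun a => add_sub_cancel_left (x a) (x0 a)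
  simp only [hdiff, he0, one_div_mul_eq_div]
  -- a vanishing frame constant is covered too, as `1 / 0 = 0`
  exact div_le_of_le_mul₀ (mul_nonneg (Real.sqrt_nonneg _) (fT_nonneg _ _)) (Real.sqrt_nonneg _)
    ((hframe x0 hx0).trans_eq (mul_comm _ _))

/-- Theorem 5.1 (ii), deterministic form. Space-time nodes are pairs
`q = (t,i)`, `(π_{A,T}(x))(q) = (A^{q.1} x)(q.2)`, `(Φ v)_i = d_i v(s(i))` and
`(D e)_i = d_i e_i`.  Suppose the upper frame bound
`‖Φ π_{A,T}(v)‖₂ ≤ √(1+δ) f_T(λ_1) ‖v‖₂` holds on `span{u_1,…,u_k}`.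
With `(e₀)_i = (π_{A,T}(x₀))(s(i))` and `y_i = (π_{A,T}(x))(s(i)) + (e₀)_i`,
the vector `x* = x + x₀` has objective value `0` (hence is a minimizer of
`x̃ ↦ ‖Φ π_{A,T}(x̃) − D y‖₂` over `span{u_1,…,u_k}`) and
`‖x* − x‖₂ ≥ (1/(√(1+δ) f_T(λ_1))) ‖D e₀‖₂`. -/
theorem stmt13 (n k T M : ℕ) (hn : 0 < n) (hk : 0 < k) (hT : 0 < T) (hkn : k ≤ n)
    (hM : 0 < M)
    (u : Fin k → Fin n → ℝ)
    (hu : ∀ i j : Fin k, ∑ a, u i a * u j a = if i = j then 1 else 0)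
    (lam : Fin k → ℝ)
    (hmono : ∀ i j : Fin k, i ≤ j → lam j ≤ lam i)
    (hnn : ∀ j, 0 ≤ lam j)
    (A : Matrix (Fin n) (Fin n) ℝ) (hA : A.IsSymm)
    (heig : ∀ j : Fin k, A.mulVec (u j) = lam j • u j)
    (s : Fin M → Fin T × Fin n) (d : Fin M → ℝ) (hd : ∀ i, 0 < d i)
    (δ : ℝ) (hδ0 : 0 < δ) (hδ1 : δ < 1)
    (hframe : ∀ v ∈ Submodule.span ℝ (Set.range u),
      Real.sqrt (∑ i, (d i * ((A ^ ((s i).1 : ℕ)).mulVec v) (s i).2) ^ 2)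
        ≤ Real.sqrt (1 + δ) * fT T (lam ⟨0, hk⟩) * Real.sqrt (∑ a, v a ^ 2))
    (x : Fin n → ℝ) (hx : x ∈ Submodule.span ℝ (Set.range u))
    (x0 : Fin n → ℝ) (hx0 : x0 ∈ Submodule.span ℝ (Set.range u))
    (e0 : Fin M → ℝ) (he0 : ∀ i, e0 i = ((A ^ ((s i).1 : ℕ)).mulVec x0) (s i).2)
    (y : Fin M → ℝ)
    (hy : ∀ i, y i = ((A ^ ((s i).1 : ℕ)).mulVec x) (s i).2 + e0 i) :
    Real.sqrt (∑ i, (d i * ((A ^ ((s i).1 : ℕ)).mulVec (x + x0)) (s i).2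
          - d i * y i) ^ 2) = 0 ∧
      (∀ z ∈ Submodule.span ℝ (Set.range u),
        Real.sqrt (∑ i, (d i * ((A ^ ((s i).1 : ℕ)).mulVec (x + x0)) (s i).2
              - d i * y i) ^ 2)
          ≤ Real.sqrt (∑ i, (d i * ((A ^ ((s i).1 : ℕ)).mulVec z) (s i).2
              - d i * y i) ^ 2)) ∧
      1 / (Real.sqrt (1 + δ) * fT T (lam ⟨0, hk⟩))
          * Real.sqrt (∑ i, (d i * e0 i) ^ 2)
        ≤ Real.sqrt (∑ a, ((x + x0) a - x a) ^ 2) :=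
  stmt13_general n k T M hk u lam A s d δ hframe x x0 hx0 e0 he0 y hy
end

section
/- (Theorem 5.2, bound (5.7), deterministic form.) Under the stated hypotheses, ‖β*‖₂ ≤ (1/√(γ g(σ_{k+1}))) ‖D e‖₂ + √(g(σ_k)/g(σ_{k+1})) ‖x‖₂. -/
/-! Expand everything in the orthonormal eigenbasis `u`, in which `vᵀGv = Σ_j g(σ_j) ⟨u_j, v⟩²`.
Comparing the objective at `x*` with its value at the signal `x`, whose residual is exactly `De`,
gives `γ x*ᵀGx* ≤ ‖De‖² + γ xᵀGx`. As `x` lies in the span of the first `k` eigenvectors and `g`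
is nondecreasing along the `σ_j`, `xᵀGx ≤ g(σ_k) ‖x‖²`; as `β*` keeps exactly the coefficients of
`x*` beyond the `k`-th and `g(σ_j) ≥ 0`, `x*ᵀGx* ≥ g(σ_{k+1}) ‖β*‖²`. Taking square roots, with
`√(p + q) ≤ √p + √q`, gives the bound. -/

open Matrix

section OrthogonalExpansion

variable {ι : Type*} [Fintype ι] [DecidableEq ι] {u : Matrix ι ι ℝ}

theorem Matrix.of_mul_transpose_eq_one_of_sum_mul_eq_ite {v : ι → ι → ℝ}
    (hv : ∀ i j, ∑ a, v i a * v j a = if i = j then 1 else 0) : of v * (of v)ᵀ = 1 := by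
  ext i j
  simpa [mul_apply, one_apply] using hv i j

theorem Matrix.eq_transpose_mul_diagonal_mul {G : Matrix ι ι ℝ} {w : ι → ℝ}
    (hG : ∀ a b, G a b = ∑ j, w j * u j a * u j b) : G = uᵀ * diagonal w * u := by
  ext a b
  rw [hG, mul_apply]
  simp only [mul_diagonal, transpose_apply]
  exact Finset.sum_congr rfl fun j _ => by ring

theorem Matrix.mulVec_row_of_mul_transpose_eq_one (hu : u * uᵀ = 1) (j : ι) :
    u *ᵥ u j = Pi.single j 1 := by
  funext i
  simpa [mul_apply, one_apply, Pi.single_apply, mulVec, dotProduct] using congrFun (congrFun hu i) j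

theorem Matrix.sum_sq_mulVec_of_mul_transpose_eq_one (hu : u * uᵀ = 1) (v : ι → ℝ) :
    ∑ j, (u *ᵥ v) j ^ 2 = ∑ a, v a ^ 2 := by
  have hu' : uᵀ * u = 1 := mul_eq_one_comm.mp hu
  simp only [sq]
  change (u *ᵥ v) ⬝ᵥ (u *ᵥ v) = v ⬝ᵥ v
  rw [dotProduct_mulVec, ← vecMul_transpose, vecMul_vecMul, hu', vecMul_one]

theorem Matrix.mulVec_apply_eq_zero_of_mem_span_rows (hu : u * uᵀ = 1) {κ : Type*} {f : κ → ι}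
    {x : ι → ℝ} (hx : x ∈ Submodule.span ℝ (Set.range fun i => u (f i))) {j : ι}
    (hj : j ∉ Set.range f) : (u *ᵥ x) j = 0 := by
  suffices Submodule.span ℝ (Set.range fun i => u (f i)) ≤
      LinearMap.ker ((LinearMap.proj j).comp u.mulVecLin) from this hx
  rw [Submodule.span_le]
  rintro _ ⟨i, rfl⟩
  have hji : j ≠ f i := fun h => hj ⟨i, h.symm⟩
  simp [mulVec_row_of_mul_transpose_eq_one hu, hji]

theorem Matrix.sum_sq_sub_sum_mulVec_smul_row (hu : u * uᵀ = 1) (S : Finset ι) (v : ι → ℝ) :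
    ∑ a, (v - ∑ j ∈ S, (u *ᵥ v) j • u j) a ^ 2 = ∑ j ∈ Sᶜ, (u *ᵥ v) j ^ 2 := by
  have hcoeff : u *ᵥ (v - ∑ j ∈ S, (u *ᵥ v) j • u j) =
      fun i => if i ∈ S then 0 else (u *ᵥ v) i := by
    funext i
    simp only [mulVec_sub, mulVec_sum, mulVec_smul, mulVec_row_of_mul_transpose_eq_one hu,
      Pi.sub_apply, Finset.sum_apply, Pi.smul_apply, Pi.single_apply, smul_eq_mul, mul_ite,
      mul_one, mul_zero, Finset.sum_ite_eq]
    split_ifs <;> ring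
  rw [← sum_sq_mulVec_of_mul_transpose_eq_one hu, hcoeff, ← Finset.sum_compl_add_sum S,
    Finset.sum_eq_zero (s := S) fun i hi => by simp [hi], add_zero]
  exact Finset.sum_congr rfl fun i hi => by simp [Finset.mem_compl.mp hi]

theorem Matrix.dotProduct_transpose_mul_diagonal_mul_mulVec (u : Matrix ι ι ℝ) (w v : ι → ℝ) :
    v ⬝ᵥ (uᵀ * diagonal w * u) *ᵥ v = ∑ j, w j * (u *ᵥ v) j ^ 2 := by
  rw [← mulVec_mulVec, ← mulVec_mulVec, dotProduct_mulVec, vecMul_transpose]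
  simp only [dotProduct, mulVec_diagonal]
  exact Finset.sum_congr rfl fun j _ => by ring

theorem Matrix.dotProduct_transpose_mul_diagonal_mul_mulVec_le (hu : u * uᵀ = 1) {w : ι → ℝ}
    {c : ℝ} {v : ι → ℝ} (hw : ∀ j, (u *ᵥ v) j ≠ 0 → w j ≤ c) :
    v ⬝ᵥ (uᵀ * diagonal w * u) *ᵥ v ≤ c * ∑ a, v a ^ 2 := by
  rw [dotProduct_transpose_mul_diagonal_mul_mulVec, ← sum_sq_mulVec_of_mul_transpose_eq_one hu,
    Finset.mul_sum]
  refine Finset.sum_le_sum fun j _ => ?_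
  by_cases hj : (u *ᵥ v) j = 0
  · simp [hj]
  · exact mul_le_mul_of_nonneg_right (hw j hj) (sq_nonneg _)

theorem Matrix.mul_sum_sq_le_dotProduct_transpose_mul_diagonal_mul_mulVec {w : ι → ℝ} {c : ℝ}
    (S : Finset ι) (hw : ∀ j, 0 ≤ w j) (hc : ∀ j ∉ S, c ≤ w j) (v : ι → ℝ) :
    c * ∑ j ∈ Sᶜ, (u *ᵥ v) j ^ 2 ≤ v ⬝ᵥ (uᵀ * diagonal w * u) *ᵥ v := by
  rw [dotProduct_transpose_mul_diagonal_mul_mulVec, Finset.mul_sum]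
  calc ∑ j ∈ Sᶜ, c * (u *ᵥ v) j ^ 2 ≤ ∑ j ∈ Sᶜ, w j * (u *ᵥ v) j ^ 2 :=
        Finset.sum_le_sum fun j hj =>
          mul_le_mul_of_nonneg_right (hc j (Finset.mem_compl.mp hj)) (sq_nonneg _)
    _ ≤ ∑ j, w j * (u *ᵥ v) j ^ 2 :=
        Finset.sum_le_sum_of_subset_of_nonneg (Finset.subset_univ _)
          fun j _ _ => mul_nonneg (hw j) (sq_nonneg _)

end OrthogonalExpansion

theorem Real.sqrt_le_of_mul_le_add_mul {γ a b B E X : ℝ} (hγ : 0 < γ) (ha : 0 < a) (hb : 0 ≤ b)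
    (hE : 0 ≤ E) (hX : 0 ≤ X) (h : γ * (a * B) ≤ E + γ * (b * X)) :
    √B ≤ 1 / √(γ * a) * √E + √(b / a) * √X := by
  have hγa : 0 < γ * a := mul_pos hγ ha
  have hB : B ≤ E / (γ * a) + b / a * X := by
    field_simp
    linarith
  have hp : (1 / √(γ * a) * √E) ^ 2 = E / (γ * a) := by
    rw [mul_pow, div_pow, Real.sq_sqrt hγa.le, Real.sq_sqrt hE]; ring
  have hq : (√(b / a) * √X) ^ 2 = b / a * X := by
    rw [mul_pow, Real.sq_sqrt (div_nonneg hb ha.le), Real.sq_sqrt hX]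
  rw [Real.sqrt_le_left (by positivity)]
  nlinarith [mul_nonneg (by positivity : 0 ≤ 1 / √(γ * a) * √E)
    (by positivity : 0 ≤ √(b / a) * √X)]

/-- Indices are 0-based: `u j` and `sig j` are `u_{j+1}` and `σ_{j+1}`, so `σ_k` and `σ_{k+1}`
are `sig ⟨k - 1, _⟩` and `sig ⟨k, hkn⟩`. -/
theorem stmt15 (n k T M : ℕ) (hkn : k < n)
    (u : Fin n → Fin n → ℝ)
    (hu : ∀ i j : Fin n, ∑ a, u i a * u j a = if i = j then 1 else 0)
    (sig : Fin n → ℝ)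
    (A : Matrix (Fin n) (Fin n) ℝ)
    (g : ℝ → ℝ) (hg0 : ∀ j, 0 ≤ g (sig j))
    (hgmono : ∀ i j : Fin n, i ≤ j → g (sig i) ≤ g (sig j))
    (hgk1 : 0 < g (sig ⟨k, hkn⟩))
    (G : Matrix (Fin n) (Fin n) ℝ)
    (hGdef : ∀ a b, G a b = ∑ j, g (sig j) * u j a * u j b)
    (s : Fin M → Fin T × Fin n) (d : Fin M → ℝ)
    (γ : ℝ) (hγ : 0 < γ)
    (x : Fin n → ℝ)
    (hx : x ∈ Submodule.span ℝ (Set.range fun j : Fin k => u (Fin.castLE hkn.le j)))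
    (e : Fin M → ℝ) (y : Fin M → ℝ)
    (hy : ∀ i, y i = ((A ^ ((s i).1 : ℕ)).mulVec x) (s i).2 + e i)
    (xstar : Fin n → ℝ)
    (hmin : ∀ z : Fin n → ℝ,
      (∑ i, (d i * ((A ^ ((s i).1 : ℕ)).mulVec xstar) (s i).2 - d i * y i) ^ 2)
          + γ * ∑ a, xstar a * G.mulVec xstar a
        ≤ (∑ i, (d i * ((A ^ ((s i).1 : ℕ)).mulVec z) (s i).2 - d i * y i) ^ 2)
          + γ * ∑ a, z a * G.mulVec z a)
    (αstar : Fin n → ℝ)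
    (hα : ∀ a, αstar a = ∑ j : Fin k,
      (∑ b, u (Fin.castLE hkn.le j) b * xstar b) * u (Fin.castLE hkn.le j) a)
    (βstar : Fin n → ℝ) (hβ : ∀ a, βstar a = xstar a - αstar a) :
    Real.sqrt (∑ a, βstar a ^ 2)
      ≤ 1 / Real.sqrt (γ * g (sig ⟨k, hkn⟩)) * Real.sqrt (∑ i, (d i * e i) ^ 2)
        + Real.sqrt (g (sig ⟨k - 1, by omega⟩) / g (sig ⟨k, hkn⟩))
          * Real.sqrt (∑ a, x a ^ 2) := by
  have hU : of u * (of u)ᵀ = 1 := of_mul_transpose_eq_one_of_sum_mul_eq_ite hu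
  have hG : G = (of u)ᵀ * diagonal (fun j => g (sig j)) * of u :=
    eq_transpose_mul_diagonal_mul hGdef
  set S := Finset.univ.map (Fin.castLEEmb hkn.le)
  have hS : ∀ j, j ∈ S ↔ (j : ℕ) < k := by
    intro j
    rw [← Finset.mem_coe, Finset.coe_map, Finset.coe_univ, Set.image_univ, Fin.coe_castLEEmb,
      Fin.range_castLE]
    rfl
  have hβS : βstar = xstar - ∑ j ∈ S, (of u *ᵥ xstar) j • of u j := by
    funext a
    simp [hβ, hα, S, Finset.sum_apply, mulVec, dotProduct]
  have hfit : γ * (xstar ⬝ᵥ G *ᵥ xstar) ≤ ∑ i, (d i * e i) ^ 2 + γ * (x ⬝ᵥ G *ᵥ x) := by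
    have hres : ∑ i, (d i * ((A ^ ((s i).1 : ℕ)).mulVec x) (s i).2 - d i * y i) ^ 2
        = ∑ i, (d i * e i) ^ 2 :=
      Finset.sum_congr rfl fun i _ => by rw [hy i]; ring
    have hx_fit := hmin x
    rw [hres] at hx_fit
    simp only [dotProduct]
    linarith [Finset.sum_nonneg fun i (_ : i ∈ Finset.univ) =>
      sq_nonneg (d i * ((A ^ ((s i).1 : ℕ)).mulVec xstar) (s i).2 - d i * y i)]
  have hxG : x ⬝ᵥ G *ᵥ x ≤ g (sig ⟨k - 1, by omega⟩) * ∑ a, x a ^ 2 := by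
    rw [hG]
    refine dotProduct_transpose_mul_diagonal_mul_mulVec_le hU fun j hj => hgmono _ _ ?_
    have hjk : (j : ℕ) < k := by
      have hj' : j ∈ Set.range (Fin.castLE hkn.le) := by
        by_contra hj'
        exact hj (mulVec_apply_eq_zero_of_mem_span_rows hU hx hj')
      rwa [Fin.range_castLE] at hj'
    exact Fin.le_def.mpr (show (j : ℕ) ≤ k - 1 by omega)
  have hβG : g (sig ⟨k, hkn⟩) * ∑ a, βstar a ^ 2 ≤ xstar ⬝ᵥ G *ᵥ xstar := by
    rw [hG, hβS, sum_sq_sub_sum_mulVec_smul_row hU]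
    refine mul_sum_sq_le_dotProduct_transpose_mul_diagonal_mul_mulVec S hg0
      (fun j hj => hgmono _ _ ?_) xstar
    exact Fin.le_def.mpr (not_lt.mp ((hS j).not.mp hj))
  refine Real.sqrt_le_of_mul_le_add_mul hγ hgk1 (hg0 _) (Finset.sum_nonneg fun i _ => sq_nonneg _)
    (Finset.sum_nonneg fun i _ => sq_nonneg _) ?_
  linarith [mul_le_mul_of_nonneg_left hβG hγ.le, mul_le_mul_of_nonneg_left hxG hγ.le]
end

section
/- (Perfect recovery by the regularized decoder in the noiseless case.) Under the stated hypotheses, if in addition e = 0 (so that y_i = (π_{A,T}(x))(s(i)) for all i) and g(σ_k) = 0, then every minimizer x* over ℝ^n of x̃ ↦ ‖Φ π_{A,T}(x̃) − D y‖₂² + γ x̃ᵀGx̃ satisfies x* = x. -/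
/-!
The regularizer `xᵀ G x = Σ_j g(σ_j) ⟨u_j, x⟩²` is nonnegative and, since `g(σ_j)` vanishes exactly
for `j ≤ k`, it vanishes exactly on `span {u_1, …, u_k}`. The noiseless objective therefore
vanishes at `x`, so any minimizer `x*` has zero data misfit and zero regularizer. The latter puts
`x*` in the span, the former gives `Φ π_{A,T}(x* − x) = 0`, and the lower frame bound on the span,
whose constant is positive because `f_T ≥ 1`, forces `x* = x`.
-/

open scoped BigOperators Matrix

open Matrix

section OrthonormalRows

variable {ι : Type*} [Fintype ι] [DecidableEq ι] {u : ι → ι → ℝ}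

theorem transpose_mul_self_of_orthonormal_rows
    (hu : ∀ i j, ∑ a, u i a * u j a = if i = j then 1 else 0) :
    (of u)ᵀ * of u = 1 := by
  refine mul_eq_one_comm.mp ?_
  ext i j
  simpa [mul_apply, one_apply] using hu i j

theorem eq_sum_mulVec_smul_of_orthonormal_rows
    (hu : ∀ i j, ∑ a, u i a * u j a = if i = j then 1 else 0) (v : ι → ℝ) :
    v = ∑ j, (of u *ᵥ v) j • u j := by
  have h : (of u)ᵀ *ᵥ (of u *ᵥ v) = v := by
    rw [mulVec_mulVec, transpose_mul_self_of_orthonormal_rows hu, one_mulVec]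
  ext a
  conv_lhs => rw [← h]
  simp [mulVec, dotProduct, Finset.sum_apply, mul_comm]

theorem mem_span_rows_iff_of_orthonormal_rows {κ : Type*}
    (hu : ∀ i j, ∑ a, u i a * u j a = if i = j then 1 else 0) (e : κ → ι) (v : ι → ℝ) :
    v ∈ Submodule.span ℝ (Set.range fun i => u (e i)) ↔
      ∀ j ∉ Set.range e, (of u *ᵥ v) j = 0 := by
  constructor
  · intro hv j hj
    induction hv using Submodule.span_induction with
    | mem w hw =>
      obtain ⟨i, rfl⟩ := hw
      have hne : j ≠ e i := fun h => hj ⟨i, h.symm⟩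
      simpa [mulVec, dotProduct, hne] using hu j (e i)
    | zero => simp
    | add w₁ w₂ _ _ h₁ h₂ => simp [mulVec_add, h₁, h₂]
    | smul r w _ h => simp [mulVec_smul, h]
  · intro hv
    rw [eq_sum_mulVec_smul_of_orthonormal_rows hu v]
    refine Submodule.sum_mem _ fun j _ => ?_
    by_cases hj : j ∈ Set.range e
    · obtain ⟨i, rfl⟩ := hj
      exact Submodule.smul_mem _ _ (Submodule.subset_span ⟨i, rfl⟩)
    · simp [hv j hj]

end OrthonormalRows

section QuadraticForm

variable {ι : Type*} [Fintype ι] [DecidableEq ι] {u : ι → ι → ℝ} {w : ι → ℝ}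
  {G : Matrix ι ι ℝ}

theorem sum_mul_mulVec_eq_sum_mul_sq (hG : ∀ a b, G a b = ∑ j, w j * u j a * u j b)
    (v : ι → ℝ) :
    ∑ a, v a * (G *ᵥ v) a = ∑ j, w j * (of u *ᵥ v) j ^ 2 := by
  have hG' : G = (of u)ᵀ * diagonal w * of u := by
    ext a b
    simp only [hG, mul_apply, transpose_apply, of_apply, diagonal_apply, mul_ite, mul_zero,
      Finset.sum_ite_eq', Finset.mem_univ, if_true]
    exact Finset.sum_congr rfl fun j _ => by ring
  change v ⬝ᵥ (G *ᵥ v) = _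
  rw [hG', ← mulVec_mulVec, ← mulVec_mulVec, dotProduct_mulVec, vecMul_transpose]
  simp only [dotProduct, mulVec_diagonal]
  exact Finset.sum_congr rfl fun j _ => by ring

theorem sum_mul_mulVec_nonneg (hG : ∀ a b, G a b = ∑ j, w j * u j a * u j b)
    (hw : ∀ j, 0 ≤ w j) (v : ι → ℝ) : 0 ≤ ∑ a, v a * (G *ᵥ v) a := by
  rw [sum_mul_mulVec_eq_sum_mul_sq hG]
  exact Finset.sum_nonneg fun j _ => mul_nonneg (hw j) (sq_nonneg _)

theorem sum_mul_mulVec_eq_zero_iff_mem_span {κ : Type*}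
    (hu : ∀ i j, ∑ a, u i a * u j a = if i = j then 1 else 0)
    (hG : ∀ a b, G a b = ∑ j, w j * u j a * u j b) (hw : ∀ j, 0 ≤ w j)
    {e : κ → ι} (hwe : ∀ j, w j = 0 ↔ j ∈ Set.range e) (v : ι → ℝ) :
    ∑ a, v a * (G *ᵥ v) a = 0 ↔ v ∈ Submodule.span ℝ (Set.range fun i => u (e i)) := by
  rw [mem_span_rows_iff_of_orthonormal_rows hu, sum_mul_mulVec_eq_sum_mul_sq hG,
    Finset.sum_eq_zero_iff_of_nonneg fun j _ => mul_nonneg (hw j) (sq_nonneg _)]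
  refine forall_congr' fun j => ?_
  simp [hwe, or_iff_not_imp_left]

end QuadraticForm

theorem one_le_fT {T : ℕ} (hT : 0 < T) (l : ℝ) : 1 ≤ fT T l := by
  rw [fT, Real.one_le_sqrt]
  calc (1 : ℝ) = l ^ (2 * 0) := by simp
    _ ≤ ∑ t ∈ Finset.range T, l ^ (2 * t) :=
      Finset.single_le_sum (fun t _ => (even_two_mul t).pow_nonneg l) (Finset.mem_range.2 hT)

/-- With 0-based indices, `σ_k` and `σ_{k+1}` are `sig ⟨k - 1, _⟩` and `sig ⟨k, _⟩`. -/
theorem stmt16 (n k T M : ℕ) (hT : 0 < T) (hkn : k < n)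
    (u : Fin n → Fin n → ℝ)
    (hu : ∀ i j : Fin n, ∑ a, u i a * u j a = if i = j then 1 else 0)
    (lam : Fin n → ℝ)
    (sig : Fin n → ℝ)
    (A : Matrix (Fin n) (Fin n) ℝ)
    (g : ℝ → ℝ) (hg0 : ∀ j, 0 ≤ g (sig j))
    (hgmono : ∀ i j : Fin n, i ≤ j → g (sig i) ≤ g (sig j))
    (hgk1 : 0 < g (sig ⟨k, hkn⟩))
    (G : Matrix (Fin n) (Fin n) ℝ)
    (hGdef : ∀ a b, G a b = ∑ j, g (sig j) * u j a * u j b)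
    (s : Fin M → Fin T × Fin n) (d : Fin M → ℝ)
    (γ : ℝ) (hγ : 0 < γ) (δ : ℝ) (hδ1 : δ < 1)
    (hframe : ∀ v ∈ Submodule.span ℝ
        (Set.range fun j : Fin k => u (Fin.castLE hkn.le j)),
      Real.sqrt (1 - δ) * fT T (lam ⟨k - 1, by omega⟩) * Real.sqrt (∑ a, v a ^ 2)
        ≤ Real.sqrt (∑ i, (d i * ((A ^ ((s i).1 : ℕ)).mulVec v) (s i).2) ^ 2))
    (x : Fin n → ℝ)
    (hx : x ∈ Submodule.span ℝ (Set.range fun j : Fin k => u (Fin.castLE hkn.le j)))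
    (y : Fin M → ℝ)
    (hy : ∀ i, y i = ((A ^ ((s i).1 : ℕ)).mulVec x) (s i).2)
    (hgk : g (sig ⟨k - 1, by omega⟩) = 0)
    (xstar : Fin n → ℝ)
    (hmin : ∀ z : Fin n → ℝ,
      (∑ i, (d i * ((A ^ ((s i).1 : ℕ)).mulVec xstar) (s i).2 - d i * y i) ^ 2)
          + γ * ∑ a, xstar a * G.mulVec xstar a
        ≤ (∑ i, (d i * ((A ^ ((s i).1 : ℕ)).mulVec z) (s i).2 - d i * y i) ^ 2)
          + γ * ∑ a, z a * G.mulVec z a) :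
    xstar = x := by
  have hg_eq_zero : ∀ j, g (sig j) = 0 ↔ j ∈ Set.range (Fin.castLE hkn.le) := by
    intro j
    rw [Fin.range_castLE]
    refine ⟨fun h => ?_, fun h => le_antisymm ?_ (hg0 j)⟩
    · by_contra! hj
      exact hgk1.ne' (le_antisymm (h ▸ hgmono _ j (Fin.le_def.2 (not_lt.1 hj))) (hg0 _))
    · exact hgk ▸ hgmono j _ (Fin.le_def.2 (by simp at h ⊢; omega))
  have hreg_zero := sum_mul_mulVec_eq_zero_iff_mem_span hu hGdef hg0 hg_eq_zero
  have hresidual : ∀ z, ∑ i, (d i * ((A ^ ((s i).1 : ℕ)).mulVec z) (s i).2 - d i * y i) ^ 2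
      = ∑ i, (d i * ((A ^ ((s i).1 : ℕ)).mulVec (z - x)) (s i).2) ^ 2 := fun z => by
    simp only [hy, mulVec_sub, Pi.sub_apply, mul_sub]
  obtain ⟨hfit, hreg⟩ :
      ∑ i, (d i * ((A ^ ((s i).1 : ℕ)).mulVec (xstar - x)) (s i).2) ^ 2 = 0 ∧
        ∑ a, xstar a * G.mulVec xstar a = 0 := by
    have h := hmin x
    rw [hresidual, hresidual, sub_self, (hreg_zero x).2 hx] at h
    simp only [mulVec_zero, Pi.zero_apply, mul_zero, zero_pow two_ne_zero,
      Finset.sum_const_zero, add_zero] at h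
    have hfit_nonneg := Finset.sum_nonneg fun i (_ : i ∈ Finset.univ) =>
      sq_nonneg (d i * ((A ^ ((s i).1 : ℕ)).mulVec (xstar - x)) (s i).2)
    have hreg_nonneg := mul_nonneg hγ.le (sum_mul_mulVec_nonneg hGdef hg0 xstar)
    refine ⟨by linarith, (mul_eq_zero.1 (by linarith : γ * _ = 0)).resolve_left hγ.ne'⟩
  have hbound := hframe _ (Submodule.sub_mem _ ((hreg_zero xstar).1 hreg) hx)
  have hC : 0 < Real.sqrt (1 - δ) * fT T (lam ⟨k - 1, by omega⟩) :=
    mul_pos (Real.sqrt_pos.2 (by linarith)) (one_pos.trans_le (one_le_fT hT _))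
  rw [hfit, Real.sqrt_zero, mul_nonpos_iff_pos_imp_nonpos] at hbound
  have hnorm : √(∑ a, (xstar - x) a ^ 2) = 0 := le_antisymm (hbound.1 hC) (Real.sqrt_nonneg _)
  rw [Real.sqrt_eq_zero (Finset.sum_nonneg fun a _ => sq_nonneg _)] at hnorm
  simp_rw [sq] at hnorm
  exact sub_eq_zero.1 (dotProduct_self_eq_zero.1 hnorm)
end
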